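/- The ROBF map F is a standard function on the nonnegative orthant: (a) Positivity: for every μ with nonnegative entries, all entries of F(μ) are strictly positive; (b) Monotonicity: if μ ≤ μ' entrywise, then F(μ) ≤ F(μ') entrywise; (c) Scalability: for every β > 1 and every μ with nonnegative entries, F(βμ) < β·F(μ) entrywise (strict inequality in every coordinate). -/

import Mathlib

open Finset

/-!
Multiplying the defining equation of `m̄ᵢ(μ)` by `m̄ᵢ(μ)` gives
`m̄ = 1 - c ∑ x/(1 + x)` with `x = σ μ m̄` and `c = 1/Nₜ ≥ 0`. Since `t ↦ t/(1 + t)` is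
increasing, a larger vector `x` forces a smaller `m̄`. If `μ ≤ μ'` and `m̄(μ) < m̄(μ')` then
`x(μ) ≤ x(μ')`, forcing `m̄(μ') ≤ m̄(μ)`; if `β m̄(βμ) ≤ m̄(μ)` then `x(βμ) ≤ x(μ)`, forcing
`m̄(μ) ≤ m̄(βμ)`, impossible for `β > 1`. So `m̄` is antitone and `m̄(μ) < β m̄(βμ)`, which is
monotonicity and strict scalability of `F = γ/(σ m̄)`.
-/

lemma div_one_add_le_div_one_add {x y : ℝ} (hx : 0 ≤ x) (hxy : x ≤ y) :
    x / (1 + x) ≤ y / (1 + y) := by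
  rw [div_le_div_iff₀ (by linarith) (by linarith)]
  linarith

section FixedPointEquation

variable {ι κ : Type*} [Fintype ι] [Fintype κ]

def SolvesFixedPointEq (c : ℝ) (a : ι → κ → ℝ) (m : ℝ) : Prop :=
  0 < m ∧ 1 / m = c * ∑ n, ∑ k, a n k / (1 + a n k * m) + 1

lemma SolvesFixedPointEq.eq_one_sub {c m : ℝ} {a : ι → κ → ℝ} (h : SolvesFixedPointEq c a m) :
    m = 1 - c * ∑ n, ∑ k, a n k * m / (1 + a n k * m) := by
  obtain ⟨hm, heq⟩ := h
  have hmul := congrArg (· * m) heq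
  simp only [one_div, inv_mul_cancel₀ hm.ne', add_mul, one_mul, mul_assoc, sum_mul,
    div_mul_eq_mul_div] at hmul
  linarith

lemma le_of_eq_one_sub_of_le {c m m' : ℝ} (hc : 0 ≤ c) {x y : ι → κ → ℝ}
    (hx : ∀ n k, 0 ≤ x n k) (hxy : ∀ n k, x n k ≤ y n k)
    (hm : m = 1 - c * ∑ n, ∑ k, x n k / (1 + x n k))
    (hm' : m' = 1 - c * ∑ n, ∑ k, y n k / (1 + y n k)) :
    m' ≤ m := by
  have hsum : ∑ n, ∑ k, x n k / (1 + x n k) ≤ ∑ n, ∑ k, y n k / (1 + y n k) :=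
    sum_le_sum fun n _ => sum_le_sum fun k _ =>
      div_one_add_le_div_one_add (hx n k) (hxy n k)
  rw [hm, hm']
  linarith [mul_le_mul_of_nonneg_left hsum hc]

lemma SolvesFixedPointEq.antitone {c m m' : ℝ} (hc : 0 ≤ c) {a a' : ι → κ → ℝ}
    (ha : ∀ n k, 0 ≤ a n k) (haa' : ∀ n k, a n k ≤ a' n k)
    (h : SolvesFixedPointEq c a m) (h' : SolvesFixedPointEq c a' m') :
    m' ≤ m := by
  by_contra! hlt
  have hx : ∀ n k, 0 ≤ a n k * m := fun n k => mul_nonneg (ha n k) h.1.le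
  have hxy : ∀ n k, a n k * m ≤ a' n k * m' := fun n k =>
    mul_le_mul (haa' n k) hlt.le h.1.le ((ha n k).trans (haa' n k))
  exact hlt.not_ge (le_of_eq_one_sub_of_le hc hx hxy h.eq_one_sub h'.eq_one_sub)

lemma SolvesFixedPointEq.lt_mul_of_smul {c m m' β : ℝ} (hc : 0 ≤ c) (hβ : 1 < β)
    {a b : ι → κ → ℝ} (ha : ∀ n k, 0 ≤ a n k) (hb : ∀ n k, b n k = β * a n k)
    (h : SolvesFixedPointEq c a m) (h' : SolvesFixedPointEq c b m') :
    m < β * m' := by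
  by_contra! hle
  have hx : ∀ n k, 0 ≤ b n k * m' := fun n k =>
    mul_nonneg (by rw [hb]; exact mul_nonneg (by linarith) (ha n k)) h'.1.le
  have hxy : ∀ n k, b n k * m' ≤ a n k * m := fun n k => by
    rw [hb, mul_comm β, mul_assoc]
    exact mul_le_mul_of_nonneg_left hle (ha n k)
  have hmm' := le_of_eq_one_sub_of_le hc hx hxy h'.eq_one_sub h.eq_one_sub
  nlinarith [h'.1]

end FixedPointEquation

lemma div_mul_lt_mul_div_mul {γ s m m' β : ℝ} (hγ : 0 < γ) (hs : 0 < s) (hm : 0 < m)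
    (hm' : 0 < m') (hmm' : m < β * m') :
    γ / (s * m') < β * (γ / (s * m)) := by
  rw [← mul_div_assoc, div_lt_div_iff₀ (by positivity) (by positivity)]
  have := mul_lt_mul_of_pos_left hmm' (mul_pos hγ hs)
  linarith

/-- The ROBF map is a standard function on the nonnegative orthant:
positivity, monotonicity and (strict) scalability. -/
theorem robf_map_is_standard
    (N K Nt : ℕ)
    (σ : Fin N → Fin N → Fin K → ℝ) (hσ : ∀ i n k, 0 < σ i n k)
    (γ : Fin N → Fin K → ℝ) (hγ : ∀ i j, 0 < γ i j)
    (mbar : (Fin N → Fin K → ℝ) → Fin N → ℝ)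
    (hmbar : ∀ μ : Fin N → Fin K → ℝ, (∀ n k, 0 ≤ μ n k) → ∀ i : Fin N,
      0 < mbar μ i ∧
      1 / mbar μ i =
        (1 / (Nt : ℝ)) * ∑ n, ∑ k, σ i n k * μ n k / (1 + σ i n k * μ n k * mbar μ i) + 1)
    (F : (Fin N → Fin K → ℝ) → Fin N → Fin K → ℝ)
    (hF : ∀ μ i j, F μ i j = γ i j / (σ i i j * mbar μ i)) :
    (∀ μ : Fin N → Fin K → ℝ, (∀ n k, 0 ≤ μ n k) → ∀ i j, 0 < F μ i j) ∧
    (∀ μ μ' : Fin N → Fin K → ℝ, (∀ n k, 0 ≤ μ n k) → (∀ n k, μ n k ≤ μ' n k) →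
      ∀ i j, F μ i j ≤ F μ' i j) ∧
    (∀ β : ℝ, 1 < β → ∀ μ : Fin N → Fin K → ℝ, (∀ n k, 0 ≤ μ n k) →
      ∀ i j, F (fun n k => β * μ n k) i j < β * F μ i j) := by
  have hc : (0 : ℝ) ≤ 1 / (Nt : ℝ) := by positivity
  have hsol : ∀ μ, (∀ n k, 0 ≤ μ n k) → ∀ i,
      SolvesFixedPointEq (1 / (Nt : ℝ)) (fun n k => σ i n k * μ n k) (mbar μ i) := hmbar
  have ha : ∀ μ : Fin N → Fin K → ℝ, (∀ n k, 0 ≤ μ n k) → ∀ i n k, 0 ≤ σ i n k * μ n k :=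
    fun μ hμ i n k => mul_nonneg (hσ i n k).le (hμ n k)
  refine ⟨fun μ hμ i j => ?_, fun μ μ' hμ hμμ' i j => ?_, fun β hβ μ hμ i j => ?_⟩
  · rw [hF]
    exact div_pos (hγ i j) (mul_pos (hσ i i j) (hsol μ hμ i).1)
  · have hμ' n k : 0 ≤ μ' n k := (hμ n k).trans (hμμ' n k)
    have hanti := (hsol μ hμ i).antitone hc (ha μ hμ i)
      (fun n k => mul_le_mul_of_nonneg_left (hμμ' n k) (hσ i n k).le) (hsol μ' hμ' i)
    rw [hF, hF]
    gcongr
    exacts [(hγ i j).le, mul_pos (hσ i i j) (hsol μ' hμ' i).1, (hσ i i j).le]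
  · have hβμ n k : 0 ≤ β * μ n k := mul_nonneg (by linarith) (hμ n k)
    have hscale := (hsol μ hμ i).lt_mul_of_smul hc hβ (ha μ hμ i)
      (fun n k => mul_left_comm _ _ _) (hsol _ hβμ i)
    rw [hF, hF]
    exact div_mul_lt_mul_div_mul (hγ i j) (hσ i i j) (hsol μ hμ i).1 (hsol _ hβμ i).1 hscale
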